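/- arXiv:2401.10539 — 3 statements merged into one kernel-verified Lean document; each statement's English description precedes it below -/
import Mathlib

section
/- Suppose real numbers OPT ≥ 0, 0 ≤ γ_x ≤ 1, γ_min ≤ γ_x, k ≥ 1 an integer, and i < k a natural number. If f(x) ≥ (1 − (1 − γ_min/k)^i)·OPT and f(x') ≥ (1 − γ_x/k)·f(x) + (γ_x/k)·OPT, then f(x') ≥ (1 − (1 − γ_min/k)^{i+1})·OPT. -/
theorem one_sub_one_sub_pow_succ_mul_le {c d opt y y' : ℝ} {i : ℕ}
    (hc : c ≤ 1) (hdc : d ≤ c) (hopt : 0 ≤ opt)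
    (hy : (1 - (1 - d) ^ i) * opt ≤ y) (hy' : (1 - c) * y + c * opt ≤ y') :
    (1 - (1 - d) ^ (i + 1)) * opt ≤ y' := by
  have hpow : 0 ≤ (1 - d) ^ i := pow_nonneg (by linarith) i
  calc (1 - (1 - d) ^ (i + 1)) * opt = opt - (1 - d) * ((1 - d) ^ i * opt) := by ring
    _ ≤ opt - (1 - c) * ((1 - d) ^ i * opt) := by gcongr
    _ = (1 - c) * ((1 - (1 - d) ^ i) * opt) + c * opt := by ring
    _ ≤ (1 - c) * y + c * opt := by gcongr
    _ ≤ y' := hy'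

theorem stmt_4_general (OPT γx γmin fx fx' : ℝ) (k : ℕ) (i : ℕ)
    (hOPT : 0 ≤ OPT) (hγx1 : γx ≤ 1) (hγmin : γmin ≤ γx)
    (hk : 1 ≤ k)
    (hfx : fx ≥ (1 - (1 - γmin / k) ^ i) * OPT)
    (hfx' : fx' ≥ (1 - γx / k) * fx + (γx / k) * OPT) :
    fx' ≥ (1 - (1 - γmin / k) ^ (i + 1)) * OPT := by
  have hk' : (1 : ℝ) ≤ k := by exact_mod_cast hk
  refine one_sub_one_sub_pow_succ_mul_le ?_ ?_ hOPT hfx hfx'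
  · exact div_le_one_of_le₀ (hγx1.trans hk') (by positivity)
  · gcongr

theorem stmt_4 (OPT γx γmin fx fx' : ℝ) (k : ℕ) (i : ℕ)
    (hOPT : 0 ≤ OPT) (hγx0 : 0 ≤ γx) (hγx1 : γx ≤ 1) (hγmin : γmin ≤ γx)
    (hk : 1 ≤ k) (hi : i < k)
    (hfx : fx ≥ (1 - (1 - γmin / k) ^ i) * OPT)
    (hfx' : fx' ≥ (1 - γx / k) * fx + (γx / k) * OPT) :
    fx' ≥ (1 - (1 - γmin / k) ^ (i + 1)) * OPT :=
  stmt_4_general OPT γx γmin fx fx' k i hOPT hγx1 hγmin hk hfx hfx'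
end

section
/- Let U be a finite ground set with |U| = m, V = {S_1,…,S_n} a collection of subsets of U with positive weights w_i, and suppose x* ⊆ V covers U (⋃_{S∈x*} S = U) with total weight OPT. Then for any x ⊆ V with c(x) = k < m (where c(x) = |⋃_{S∈x} S|), there exists an index i with S_i ∉ x and c(x∪{S_i}) > c(x) such that w_i / (c(x∪{S_i}) − c(x)) ≤ OPT / (m − k). -/
/-!
Let `A` be the set of elements already covered by `x`. The sets of the optimal cover together
cover the `m - k` uncovered elements, so their gains `|S j \ A|` sum to at least `m - k`, while
their weights sum to `OPT`. The best ratio `w j / |S j \ A|` among them is at most the ratio of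
the sums, hence at most `OPT / (m - k)`; a set with positive gain is not already in `x`.
-/

open Finset

theorem Finset.exists_pos_div_le_sum_div {ι 𝕜 : Type*} [Field 𝕜] [LinearOrder 𝕜]
    [IsStrictOrderedRing 𝕜] {s : Finset ι} {w d : ι → 𝕜} (hw : ∀ j ∈ s, 0 ≤ w j)
    (hd : ∀ j ∈ s, 0 ≤ d j) (hsum : 0 < ∑ j ∈ s, d j) :
    ∃ i ∈ s, 0 < d i ∧ w i / d i ≤ (∑ j ∈ s, w j) / ∑ j ∈ s, d j := by
  obtain ⟨j₀, hj₀, hdj₀⟩ := exists_lt_of_sum_lt (f := fun _ => 0) (g := d) (by simpa using hsum)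
  obtain ⟨i, hiT, hmin⟩ := (s.filter (0 < d ·)).exists_min_image (fun j => w j / d j)
    ⟨j₀, mem_filter.2 ⟨hj₀, hdj₀⟩⟩
  obtain ⟨his, hdi⟩ := mem_filter.1 hiT
  refine ⟨i, his, hdi, (le_div_iff₀ hsum).2 ?_⟩
  rw [mul_sum]
  refine sum_le_sum fun j hj => ?_
  rcases (hd j hj).eq_or_lt with h | h
  · rw [← h, mul_zero]
    exact hw j hj
  · exact (le_div_iff₀ h).1 (hmin j (mem_filter.2 ⟨hj, h⟩))

theorem Finset.card_biUnion_sdiff_le_sum {ι α : Type*} [DecidableEq α] (t : Finset ι)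
    (S : ι → Finset α) (A : Finset α) : #(t.biUnion S \ A) ≤ ∑ j ∈ t, #(S j \ A) :=
  calc #(t.biUnion S \ A) ≤ #(t.biUnion fun j => S j \ A) := by
        refine card_le_card fun a ha => ?_
        simp only [mem_sdiff, mem_biUnion] at ha ⊢
        obtain ⟨⟨j, hj, haj⟩, haA⟩ := ha
        exact ⟨j, hj, haj, haA⟩
    _ ≤ ∑ j ∈ t, #(S j \ A) := card_biUnion_le

theorem Finset.card_biUnion_insert {ι α : Type*} [DecidableEq ι] [DecidableEq α]
    (S : ι → Finset α) (i : ι) (x : Finset ι) :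
    #((insert i x).biUnion S) = #(S i \ x.biUnion S) + #(x.biUnion S) := by
  rw [biUnion_insert, card_sdiff_add_card]

theorem stmt_6 {U : Type*} [Fintype U] [DecidableEq U] {n m : ℕ}
    (hm : Fintype.card U = m)
    (S : Fin n → Finset U) (w : Fin n → ℝ) (hw : ∀ i, 0 < w i)
    (xstar : Finset (Fin n)) (hcover : xstar.biUnion S = Finset.univ)
    (x : Finset (Fin n)) (k : ℕ) (hk : (x.biUnion S).card = k) (hkm : k < m) :
    ∃ i : Fin n, i ∉ x ∧ ((insert i x).biUnion S).card > (x.biUnion S).card ∧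
      w i / ((((insert i x).biUnion S).card : ℝ) - ((x.biUnion S).card : ℝ)) ≤
        (∑ j ∈ xstar, w j) / ((m : ℝ) - (k : ℝ)) := by
  set A := x.biUnion S
  have hgap : (m : ℝ) - k ≤ ∑ j ∈ xstar, (#(S j \ A) : ℝ) := by
    have h := card_biUnion_sdiff_le_sum xstar S A
    rw [hcover, ← compl_eq_univ_sdiff, card_compl, hm, hk] at h
    exact_mod_cast (Nat.cast_sub hkm.le).symm.trans_le (Nat.cast_le.2 h)
  have hpos : (0 : ℝ) < m - k := sub_pos.2 (by exact_mod_cast hkm)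
  obtain ⟨i, -, hgain, hratio⟩ := exists_pos_div_le_sum_div (fun j _ => (hw j).le)
    (fun j _ => Nat.cast_nonneg _) (hpos.trans_le hgap)
  have hix : i ∉ x := fun hix => by
    rw [Nat.cast_pos, card_pos, sdiff_nonempty] at hgain
    exact hgain (subset_biUnion_of_mem S hix)
  refine ⟨i, hix, ?_, ?_⟩
  · rw [card_biUnion_insert]
    exact Nat.lt_add_of_pos_left (by exact_mod_cast hgain)
  · rw [card_biUnion_insert, Nat.cast_add, add_sub_cancel_right]
    exact hratio.trans (div_le_div_of_nonneg_left (sum_nonneg fun j _ => (hw j).le) hpos hgap)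
end

section
/- In the maximum coverage instance on K_{(1+δ)n/3,(2−δ)n/3} with budget k = (1+δ)n/3 (0 < δ < 1/2, all quantities integers), let x_local be a feasible solution consisting of exactly k right-side sets. Then any feasible solution y with f(y) > f(x_local) must contain at least δn left-side sets not in x_local and must omit at least δn of the right-side sets of x_local; i.e., |y ∖ x_local| ≥ δn restricted to left sets and |x_local ∖ y| ≥ δn. -/
/-! A solution with `L` left and `R` right sets covers `L * b + a * R - L * R` edges. Under the
budget `L + R ≤ a` this is at most `a² - L * (2a - b - L) = a² - L * (δn - L)`, while `x_local`
covers `a²`; so beating `x_local` forces `L > δn`. The budget then leaves room for at most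
`a - L` of the right sets of `x_local`. -/

open Finset

def bipSets (a b : ℕ) : (Fin a ⊕ Fin b) → Finset (Fin a × Fin b)
  | Sum.inl i => {i} ×ˢ Finset.univ
  | Sum.inr j => Finset.univ ×ˢ {j}

def bipCov (a b : ℕ) (x : Finset (Fin a ⊕ Fin b)) : ℕ :=
  (x.biUnion (bipSets a b)).card

namespace Finset

variable {α β : Type*}

lemma card_filter_isLeft (u : Finset (α ⊕ β)) : #(u.filter fun s => s.isLeft) = #u.toLeft := by
  rw [← card_map (Function.Embedding.inl : α ↪ α ⊕ β)]
  congr 1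
  ext (i | j) <;> simp

lemma toLeft_eq_empty_iff_forall_isRight {u : Finset (α ⊕ β)} :
    u.toLeft = ∅ ↔ ∀ s ∈ u, s.isRight := by
  simp only [eq_empty_iff_forall_notMem, mem_toLeft]
  constructor
  · rintro h (i | j) hs
    · exact absurd hs (h i)
    · rfl
  · intro h i hi
    simpa using h _ hi

lemma card_inter_le_card_toRight [DecidableEq α] [DecidableEq β] {u : Finset (α ⊕ β)} (hu : u.toLeft = ∅) (v : Finset (α ⊕ β)) :
    #(u ∩ v) ≤ #v.toRight := by
  rw [← card_toLeft_add_card_toRight, toLeft_inter, hu, empty_inter, card_empty, zero_add]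
  exact card_le_card (toRight_subset_toRight inter_subset_right)

end Finset

section Bipartite

variable {a b : ℕ}

lemma biUnion_bipSets (x : Finset (Fin a ⊕ Fin b)) :
    x.biUnion (bipSets a b) = x.toLeft ×ˢ univ ∪ univ ×ˢ x.toRight := by
  ext ⟨i, j⟩
  simp only [mem_biUnion, mem_union, mem_product, mem_univ, and_true, true_and, mem_toLeft,
    mem_toRight]
  constructor
  · rintro ⟨i' | j', hs, hmem⟩ <;> simp only [bipSets, mem_product, mem_singleton,
      mem_univ, and_true, true_and] at hmem <;> subst hmem
    · exact .inl hs
    · exact .inr hs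
  · rintro (h | h)
    · exact ⟨.inl i, h, by simp [bipSets]⟩
    · exact ⟨.inr j, h, by simp [bipSets]⟩

lemma bipCov_add_mul (x : Finset (Fin a ⊕ Fin b)) :
    bipCov a b x + #x.toLeft * #x.toRight = #x.toLeft * b + a * #x.toRight := by
  have hinter : (x.toLeft ×ˢ univ) ∩ (univ ×ˢ x.toRight) = x.toLeft ×ˢ x.toRight := by
    ext ⟨i, j⟩
    simp [and_comm]
  have := card_union_add_card_inter (x.toLeft ×ˢ (univ : Finset (Fin b)))
    ((univ : Finset (Fin a)) ×ˢ x.toRight)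
  rwa [hinter, card_product, card_product, card_product, card_univ, card_univ,
    Fintype.card_fin, Fintype.card_fin, ← biUnion_bipSets] at this

lemma bipCov_of_toLeft_eq_empty {x : Finset (Fin a ⊕ Fin b)} (hx : x.toLeft = ∅) :
    bipCov a b x = a * #x := by
  have := bipCov_add_mul x
  rw [← card_toLeft_add_card_toRight (u := x)]
  simp_all

lemma bipCov_le_sq {y : Finset (Fin a ⊕ Fin b)} (hy : #y ≤ a) (hL : #y.toLeft + b ≤ 2 * a) :
    bipCov a b y ≤ a * a := by
  have hcov := bipCov_add_mul y
  have hLR := card_toLeft_add_card_toRight (u := y)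
  set L := #y.toLeft
  set R := #y.toRight
  -- `L * b ≤ L * (2a - L)` and `R * (a - L) ≤ (a - L)²`
  nlinarith [Nat.mul_le_mul_left L (show b ≤ 2 * a - L by omega),
    Nat.mul_le_mul_right (a - L) (show R ≤ a - L by omega), Nat.sub_add_cancel
      (show L ≤ a by omega)]

end Bipartite

theorem stmt_15_general (n a b d : ℕ) (δ : ℝ)
    (ha : (a : ℝ) = (1 + δ) * n / 3) (hb : (b : ℝ) = (2 - δ) * n / 3)
    (hd : (d : ℝ) = δ * n)
    (xlocal : Finset (Fin a ⊕ Fin b))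
    (hxr : ∀ s ∈ xlocal, s.isRight) (hxc : xlocal.card = a)
    (y : Finset (Fin a ⊕ Fin b)) (hyfeas : y.card ≤ a)
    (hbetter : bipCov a b y > bipCov a b xlocal) :
    ((y \ xlocal).filter (fun s => s.isLeft)).card ≥ d ∧
    (xlocal \ y).card ≥ d := by
  have hx : xlocal.toLeft = ∅ := toLeft_eq_empty_iff_forall_isRight.2 hxr
  have hbd : 2 * a = b + d := by
    exact_mod_cast (by rw [ha, hb, hd]; ring : (2 * a : ℝ) = b + d)
  have hL : d ≤ #y.toLeft := by
    by_contra! h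
    have := bipCov_le_sq hyfeas (by omega)
    rw [bipCov_of_toLeft_eq_empty hx, hxc] at hbetter
    omega
  refine ⟨?_, ?_⟩
  · rwa [card_filter_isLeft, toLeft_sdiff, hx, sdiff_empty]
  · have := card_sdiff_add_card_inter xlocal y
    have := card_inter_le_card_toRight hx y
    have := card_toLeft_add_card_toRight (u := y)
    omega

theorem stmt_15 (n a b d : ℕ) (δ : ℝ) (hδ0 : 0 < δ) (hδ2 : δ < 1 / 2)
    (ha : (a : ℝ) = (1 + δ) * n / 3) (hb : (b : ℝ) = (2 - δ) * n / 3)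
    (hd : (d : ℝ) = δ * n)
    (xlocal : Finset (Fin a ⊕ Fin b))
    (hxr : ∀ s ∈ xlocal, s.isRight) (hxc : xlocal.card = a)
    (y : Finset (Fin a ⊕ Fin b)) (hyfeas : y.card ≤ a)
    (hbetter : bipCov a b y > bipCov a b xlocal) :
    ((y \ xlocal).filter (fun s => s.isLeft)).card ≥ d ∧
    (xlocal \ y).card ≥ d :=
  stmt_15_general n a b d δ ha hb hd xlocal hxr hxc y hyfeas hbetter
end
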